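/- For all vectors ω, γ ∈ ℝ³, the 4×4 matrix I₄ − X(ω,γ)/2 is invertible, and the Cayley-type map on SE(3) admits the polynomial expression τ(ω,γ) := (I₄ − X(ω,γ)/2)⁻¹ (I₄ + X(ω,γ)/2) = I₄ + X(ω,γ) + (2/(4+‖ω‖²)) X(ω,γ)² + (1/(4+‖ω‖²)) X(ω,γ)³. -/

import Mathlib

open Matrix

noncomputable section

/-- The embedding of `se(3)` into `4×4` real matrices: `X(ω,γ)` has upper-left `3×3`
block `ω̂`, upper-right column `γ`, and zero last row. -/
def Xse (ω γ : EuclideanSpace ℝ (Fin 3)) : Matrix (Fin 4) (Fin 4) ℝ :=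
  !![0, -ω 2, ω 1, γ 0;
     ω 2, 0, -ω 0, γ 1;
     -ω 1, ω 0, 0, γ 2;
     0, 0, 0, 0]

/-!
Because `ω̂³ = -‖ω‖² ω̂`, the matrix `X = X(ω,γ)` satisfies `X⁴ = -‖ω‖² X²`. Modulo this relation
`1 - X/2` times a cubic in `X` is again a cubic, so matching coefficients yields both the inverse
`1 + X/2 + X²/(4+s) + X³/(2(4+s))` of `1 - X/2` (where `s = ‖ω‖²`) and the cubic `τ(ω,γ)`.
-/

section QuarticRelation

variable {K R : Type*} [Field K] [Ring R] [Algebra K R] {X : R} {s : K}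

theorem one_sub_half_smul_mul_cubic (hX : X ^ 4 = (-s) • X ^ 2) (a b c : K) :
    (1 - (1/2 : K) • X) * (1 + a • X + b • X ^ 2 + c • X ^ 3) =
      1 + (a - 1/2) • X + (b - a / 2 + s * c / 2) • X ^ 2 + (c - b / 2) • X ^ 3 := by
  simp only [sub_mul, mul_add, mul_one, one_mul, smul_mul_assoc, mul_smul_comm, smul_smul,
    ← sq, ← pow_succ', hX]
  module

theorem one_sub_half_smul_mul_cayley [CharZero K] (hX : X ^ 4 = (-s) • X ^ 2) (hs : 4 + s ≠ 0) :
    (1 - (1/2 : K) • X) * (1 + X + (2 / (4 + s)) • X ^ 2 + (1 / (4 + s)) • X ^ 3) =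
      1 + (1/2 : K) • X := by
  have h := one_sub_half_smul_mul_cubic hX 1 (2 / (4 + s)) (1 / (4 + s))
  rw [one_smul] at h
  rw [h]
  match_scalars <;> field_simp <;> ring

theorem one_sub_half_smul_mul_inverse [CharZero K] (hX : X ^ 4 = (-s) • X ^ 2) (hs : 4 + s ≠ 0) :
    (1 - (1/2 : K) • X) *
        (1 + (1/2 : K) • X + (1 / (4 + s)) • X ^ 2 + (1 / (2 * (4 + s))) • X ^ 3) = 1 := by
  rw [one_sub_half_smul_mul_cubic hX]
  match_scalars <;> field_simp <;> ring

theorem isUnit_one_sub_half_smul [CharZero K] (hX : X ^ 4 = (-s) • X ^ 2) (hs : 4 + s ≠ 0) :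
    IsUnit (1 - (1/2 : K) • X) := by
  set Y := 1 + (1/2 : K) • X + (1 / (4 + s)) • X ^ 2 + (1 / (2 * (4 + s))) • X ^ 3
  have hXY : Commute X Y :=
    (((Commute.one_right X).add_right ((Commute.refl X).smul_right _)).add_right
      (((Commute.refl X).pow_right 2).smul_right _)).add_right
      (((Commute.refl X).pow_right 3).smul_right _)
  have hmul : (1 - (1/2 : K) • X) * Y = 1 := one_sub_half_smul_mul_inverse hX hs
  exact ⟨⟨_, Y, hmul, ((Commute.one_left Y).sub_left (hXY.smul_left (1/2 : K))).eq ▸ hmul⟩, rfl⟩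

end QuarticRelation

theorem Xse_pow_four (ω γ : EuclideanSpace ℝ (Fin 3)) :
    Xse ω γ ^ 4 = (-‖ω‖ ^ 2) • Xse ω γ ^ 2 := by
  rw [EuclideanSpace.real_norm_sq_eq, Fin.sum_univ_three]
  ext i j
  fin_cases i <;> fin_cases j <;>
    simp [Xse, pow_succ, Matrix.mul_apply, Fin.sum_univ_four] <;> ring

/-- `I₄ − X(ω,γ)/2` is invertible and the Cayley-type map on `SE(3)` has the polynomial
expression `τ(ω,γ) = I₄ + X + (2/(4+‖ω‖²)) X² + (1/(4+‖ω‖²)) X³`. -/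
theorem tau_polynomial_expression (ω γ : EuclideanSpace ℝ (Fin 3)) :
    IsUnit ((1 : Matrix (Fin 4) (Fin 4) ℝ) - (1/2 : ℝ) • Xse ω γ) ∧
    ((1 : Matrix (Fin 4) (Fin 4) ℝ) - (1/2 : ℝ) • Xse ω γ)⁻¹ *
        ((1 : Matrix (Fin 4) (Fin 4) ℝ) + (1/2 : ℝ) • Xse ω γ)
      = 1 + Xse ω γ + (2 / (4 + ‖ω‖^2)) • Xse ω γ ^ 2
          + (1 / (4 + ‖ω‖^2)) • Xse ω γ ^ 3 := by
  have hX := Xse_pow_four ω γ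
  have hs : 4 + ‖ω‖ ^ 2 ≠ 0 := by positivity
  have hu := isUnit_one_sub_half_smul hX hs
  refine ⟨hu, ?_⟩
  rw [← one_sub_half_smul_mul_cayley hX hs]
  exact nonsing_inv_mul_cancel_left _ _ ((isUnit_iff_isUnit_det _).mp hu)
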